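/- arXiv:math/0204345 — 6 statements merged into one kernel-verified Lean document; each statement's English description precedes it below -/
import Mathlib

section
/- The function h(r) = 3.3957 · tanh(r)/cosh(2r) is strictly decreasing on the interval [0.531, ∞), and it maps [0.531, ∞) bijectively onto the half-open interval (0, h(0.531)]. In particular, h admits an inverse function h⁻¹ defined on (0, h(0.531)] such that h⁻¹(a) = r if and only if h(r) = a and r ≥ 0.531. -/
open Real Set

private lemma exp62_bounds : (1.06396 : ℝ) ≤ Real.exp 0.062 ∧ Real.exp 0.062 ≤ (1.06397 : ℝ) := by
  have hx : |(0.062:ℝ)| ≤ 1 := by rw [abs_le]; constructor <;> norm_num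
  have h := Real.exp_bound hx (n := 4) (by norm_num)
  rw [abs_le] at h
  have hsum : ∑ i ∈ Finset.range 4, (0.062:ℝ) ^ i / i.factorial = 797971291/750000000 := by
    simp [Finset.sum_range_succ, Nat.factorial]
    norm_num
  rw [hsum] at h
  have habs : |(0.062:ℝ)| = 0.062 := by rw [abs_of_pos]; norm_num
  rw [habs] at h
  norm_num [Nat.factorial] at h
  constructor <;> [linarith [h.1]; linarith [h.2]]

private lemma exp1062_lb : (2.89214 : ℝ) ≤ Real.exp 1.062 := by
  have he : Real.exp 1.062 = Real.exp 1 * Real.exp 0.062 := by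
    rw [← Real.exp_add]; norm_num
  rw [he]
  calc (2.89214:ℝ) ≤ 2.7182818283 * 1.06396 := by norm_num
    _ ≤ Real.exp 1 * Real.exp 0.062 :=
      mul_le_mul Real.exp_one_gt_d9.le exp62_bounds.1 (by norm_num) (Real.exp_pos 1).le

private lemma exp1062_ub : Real.exp 1.062 ≤ (2.8922 : ℝ) := by
  have he : Real.exp 1.062 = Real.exp 1 * Real.exp 0.062 := by
    rw [← Real.exp_add]; norm_num
  rw [he]
  calc Real.exp 1 * Real.exp 0.062 ≤ 2.7182818286 * 1.06397 :=
      mul_le_mul Real.exp_one_lt_d9.le exp62_bounds.2 (Real.exp_pos _).le (by norm_num)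
    _ ≤ 2.8922 := by norm_num

private lemma cosh1062_lb : (1.61894 : ℝ) ≤ Real.cosh 1.062 := by
  rw [Real.cosh_eq]
  have h1 := exp1062_lb
  have h2 := exp1062_ub
  have h3 : Real.exp (-1.062) = (Real.exp 1.062)⁻¹ := by rw [Real.exp_neg]
  have h4 : (0.34575 : ℝ) ≤ Real.exp (-1.062) := by
    rw [h3]
    rw [le_inv_comm₀ (by norm_num) (Real.exp_pos _)]
    calc Real.exp 1.062 ≤ 2.8922 := h2
    _ ≤ (0.34575:ℝ)⁻¹ := by norm_num
  linarith

/-- The function `h r = 3.3957 * tanh r / cosh (2 r)` is strictly decreasing on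
`[0.531, ∞)`, maps `[0.531, ∞)` bijectively onto `(0, h 0.531]`, and therefore
admits an inverse function defined on `(0, h 0.531]` characterized by
`h⁻¹ a = r ↔ (h r = a ∧ 0.531 ≤ r)`. -/
theorem stmt_1 (h : ℝ → ℝ) (hh : ∀ r, h r = 3.3957 * Real.tanh r / Real.cosh (2 * r)) :
    StrictAntiOn h (Ici (0.531 : ℝ)) ∧
    BijOn h (Ici (0.531 : ℝ)) (Ioc 0 (h 0.531)) ∧
    ∃ hinv : ℝ → ℝ, ∀ a ∈ Ioc (0 : ℝ) (h 0.531), ∀ r : ℝ,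
      (hinv a = r ↔ (h r = a ∧ 0.531 ≤ r)) := by
  have hfun : h = fun r => 3.3957 * Real.sinh r / (Real.cosh r * Real.cosh (2 * r)) := by
    funext r
    rw [hh r, Real.tanh_eq_sinh_div_cosh, ← mul_div_assoc, div_div]
  subst hfun
  clear hh
  set g : ℝ → ℝ := fun r => 3.3957 * Real.sinh r / (Real.cosh r * Real.cosh (2 * r)) with hg
  -- positivity of denominators
  have hden : ∀ x : ℝ, 0 < Real.cosh x * Real.cosh (2 * x) :=
    fun x => mul_pos (Real.cosh_pos x) (Real.cosh_pos (2 * x))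
  -- continuity
  have hcont : Continuous g :=
    (continuous_const.mul Real.continuous_sinh).div
      (Real.continuous_cosh.mul (Real.continuous_cosh.comp (continuous_const.mul continuous_id)))
      (fun x => (hden x).ne')
  -- strict antitonicity
  have hanti : StrictAntiOn g (Ici (0.531 : ℝ)) := by
    apply strictAntiOn_of_deriv_neg (convex_Ici _) hcont.continuousOn
    intro x hx
    rw [interior_Ici] at hx
    have hx' : (0.531 : ℝ) < x := hx
    -- derivative
    have h2 : HasDerivAt (fun r : ℝ => 2 * r) 2 x := by
      simpa using (hasDerivAt_id x).const_mul (2 : ℝ)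
    have hc2 : HasDerivAt (fun r : ℝ => Real.cosh (2 * r)) (Real.sinh (2 * x) * 2) x :=
      (Real.hasDerivAt_cosh (2 * x)).comp x h2
    have hnumd : HasDerivAt (fun r : ℝ => 3.3957 * Real.sinh r) (3.3957 * Real.cosh x) x :=
      (Real.hasDerivAt_sinh x).const_mul _
    have hdend : HasDerivAt (fun r : ℝ => Real.cosh r * Real.cosh (2 * r))
        (Real.sinh x * Real.cosh (2 * x) + Real.cosh x * (Real.sinh (2 * x) * 2)) x :=
      (Real.hasDerivAt_cosh x).mul hc2
    have hD : HasDerivAt g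
        ((3.3957 * Real.cosh x * (Real.cosh x * Real.cosh (2 * x)) -
          3.3957 * Real.sinh x *
            (Real.sinh x * Real.cosh (2 * x) + Real.cosh x * (Real.sinh (2 * x) * 2))) /
          (Real.cosh x * Real.cosh (2 * x)) ^ 2) x :=
      hnumd.div hdend (hden x).ne'
    rw [hD.deriv]
    apply div_neg_of_neg_of_pos
    · -- numerator negative
      have hc2x : (1.61894 : ℝ) ≤ Real.cosh (2 * x) := by
        refine le_trans cosh1062_lb ?_
        rw [Real.cosh_le_cosh, abs_of_pos (by norm_num), abs_of_pos (by linarith)]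
        linarith
      have e1 : Real.sinh (2 * x) = 2 * Real.sinh x * Real.cosh x := Real.sinh_two_mul x
      have e2 : Real.cosh x ^ 2 = Real.sinh x ^ 2 + 1 := Real.cosh_sq x
      have e3 : Real.cosh (2 * x) ^ 2 - Real.sinh (2 * x) ^ 2 = 1 :=
        Real.cosh_sq_sub_sinh_sq (2 * x)
      rw [e1] at e3
      have key : 3.3957 * Real.cosh x * (Real.cosh x * Real.cosh (2 * x)) -
          3.3957 * Real.sinh x *
            (Real.sinh x * Real.cosh (2 * x) + Real.cosh x * (2 * Real.sinh x * Real.cosh x * 2)) =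
          3.3957 * (Real.cosh (2 * x) - Real.cosh (2 * x) ^ 2 + 1) := by
        linear_combination (3.3957 * Real.cosh (2 * x)) * e2 + 3.3957 * e3
      rw [e1, key]
      nlinarith [sq_nonneg (Real.cosh (2 * x) - 1.61894), hc2x]
    · positivity
  -- g positive on Ici
  have hpos : ∀ r : ℝ, (0.531 : ℝ) ≤ r → 0 < g r := by
    intro r hr
    have hs : 0 < Real.sinh r := Real.sinh_pos_iff.mpr (by linarith)
    exact div_pos (by linarith) (hden r)
  -- g r ≤ g 0.531 on Ici
  have hle : ∀ r : ℝ, (0.531 : ℝ) ≤ r → g r ≤ g 0.531 :=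
    fun r hr => hanti.antitoneOn (self_mem_Ici) hr hr
  -- surjectivity ingredient: for every a > 0 there is R ≥ 0.531 with g R ≤ a
  have hsmall : ∀ a : ℝ, 0 < a → ∃ R : ℝ, 0.531 ≤ R ∧ g R ≤ a := by
    intro a ha
    refine ⟨max 0.531 (3.3957 / a), le_max_left _ _, ?_⟩
    set R := max 0.531 (3.3957 / a) with hR
    have hR1 : (0.531 : ℝ) ≤ R := le_max_left _ _
    have hR2 : 3.3957 / a ≤ R := le_max_right _ _
    have haR : 3.3957 ≤ a * R := by
      rw [div_le_iff₀ ha] at hR2; linarith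
    have hsc : Real.sinh R ≤ Real.cosh R := (Real.sinh_lt_cosh R).le
    have hcR : 0 < Real.cosh R := Real.cosh_pos R
    have hc2R : (2 * R + 1) / 2 ≤ Real.cosh (2 * R) := by
      have h1 : (2 * R) + 1 ≤ Real.exp (2 * R) := Real.add_one_le_exp _
      have h2 : Real.exp (2 * R) ≤ 2 * Real.cosh (2 * R) := by
        rw [Real.cosh_eq]
        have := Real.exp_pos (-(2 * R))
        linarith
      linarith
    rw [hg]
    simp only
    rw [div_le_iff₀ (hden R)]
    have hsR : 0 < Real.sinh R := Real.sinh_pos_iff.mpr (by linarith)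
    nlinarith [mul_pos ha hcR, mul_pos hsR hcR]
  -- BijOn
  have hmaps : MapsTo g (Ici (0.531 : ℝ)) (Ioc 0 (g 0.531)) := by
    intro r hr
    exact ⟨hpos r hr, hle r hr⟩
  have hsurj : SurjOn g (Ici (0.531 : ℝ)) (Ioc 0 (g 0.531)) := by
    intro a ha
    obtain ⟨ha1, ha2⟩ := ha
    obtain ⟨R, hR1, hR2⟩ := hsmall a ha1
    have hIVT := intermediate_value_Icc' hR1 hcont.continuousOn (f := g)
    have : a ∈ Icc (g R) (g 0.531) := ⟨hR2, ha2⟩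
    obtain ⟨r, hr1, hr2⟩ := hIVT this
    exact ⟨r, hr1.1, hr2⟩
  have hbij : BijOn g (Ici (0.531 : ℝ)) (Ioc 0 (g 0.531)) :=
    ⟨hmaps, hanti.injOn, hsurj⟩
  refine ⟨hanti, hbij, Function.invFunOn g (Ici (0.531 : ℝ)), ?_⟩
  intro a ha r
  have hex : ∃ x ∈ Ici (0.531 : ℝ), g x = a := hsurj ha
  constructor
  · rintro rfl
    exact ⟨Function.invFunOn_eq hex, Function.invFunOn_mem hex⟩
  · rintro ⟨hra, hr⟩
    exact hanti.injOn (Function.invFunOn_mem hex) hr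
      ((Function.invFunOn_eq hex).trans hra.symm)
end

section
/- For every real number r, 3.3957 · tanh(r)/cosh(2r) ≤ 1.0197. Moreover, 3.3957 · tanh(0.531)/cosh(2 · 0.531) > 1.0196. -/
open Real

/-- `h r = 3.3957 * tanh r / cosh (2 r)` is at most `1.0197` for all real `r`,
and `h 0.531 > 1.0196`. -/
theorem stmt_2 :
    (∀ r : ℝ, 3.3957 * Real.tanh r / Real.cosh (2 * r) ≤ 1.0197) ∧
    3.3957 * Real.tanh 0.531 / Real.cosh (2 * 0.531) > 1.0196 := by
  constructor
  · intro r
    have hc : 0 < Real.cosh r := by positivity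
    have hsq : Real.cosh r ^ 2 = Real.sinh r ^ 2 + 1 := Real.cosh_sq r
    rw [Real.tanh_eq_sinh_div_cosh, Real.cosh_two_mul]
    set s := Real.sinh r with hs
    set c := Real.cosh r with hcdef
    have h2 : (0:ℝ) < c ^ 2 + s ^ 2 := by positivity
    rw [show 3.3957 * (s / c) = 3.3957 * s / c from by ring, div_div, div_le_iff₀ (by positivity)]
    -- key cubic inequality in u = s^2
    have key : 1.0197 ^ 2 * (1 + 2 * s ^ 2) ^ 2 * (1 + s ^ 2) - 3.3957 ^ 2 * s ^ 2 ≥ 0 := by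
      nlinarith [sq_nonneg (s ^ 2 - 0.309), sq_nonneg s, sq_nonneg (s ^ 2), mul_nonneg (sq_nonneg s) (sq_nonneg (s ^ 2 - 0.309))]
    have hA : (0:ℝ) < 1.0197 * (1 + 2 * s ^ 2) * c := by positivity
    have hA2 : (1.0197 * (1 + 2 * s ^ 2) * c) ^ 2 = 1.0197 ^ 2 * (1 + 2 * s ^ 2) ^ 2 * (1 + s ^ 2) := by
      rw [mul_pow, mul_pow, hsq]; ring
    have hB : (3.3957 * s) ^ 2 ≤ (1.0197 * (1 + 2 * s ^ 2) * c) ^ 2 := by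
      rw [hA2]; nlinarith [key]
    have hfin : 3.3957 * s ≤ 1.0197 * (1 + 2 * s ^ 2) * c := by nlinarith [hA, hB]
    nlinarith [hfin, hsq]
  · have hy : 0 < Real.exp 0.531 := Real.exp_pos _
    have hyne : Real.exp 0.531 ≠ 0 := ne_of_gt hy
    set y := Real.exp 0.531 with hydef
    have hx : Real.exp (2 * 0.531) = y ^ 2 := by
      rw [hydef, sq, ← Real.exp_add]; norm_num
    -- bounds on y^2 = exp 1.062
    have hlow : (2.8868 : ℝ) < y ^ 2 := by
      rw [← hx]
      have h1 : Real.exp (2 * 0.531) = Real.exp 1 * Real.exp 0.062 := by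
        rw [← Real.exp_add]; norm_num
      rw [h1]
      have he : (2.7182818283 : ℝ) < Real.exp 1 := Real.exp_one_gt_d9
      have h062 : (1.062 : ℝ) ≤ Real.exp 0.062 := by
        have := Real.add_one_le_exp (0.062 : ℝ); linarith
      nlinarith [Real.exp_pos (0.062 : ℝ)]
    have hhigh : y ^ 2 < (2.898 : ℝ) := by
      rw [← hx]
      have h1 : Real.exp (2 * 0.531) = Real.exp 1 * Real.exp 0.062 := by
        rw [← Real.exp_add]; norm_num
      rw [h1]
      have he : Real.exp 1 < (2.7182818286 : ℝ) := Real.exp_one_lt_d9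
      have h062 : Real.exp 0.062 ≤ 1 / 0.938 := by
        have h := Real.add_one_le_exp (-0.062 : ℝ)
        have hne : Real.exp (-0.062 : ℝ) = (Real.exp 0.062)⁻¹ := by
          rw [← Real.exp_neg]
        rw [hne] at h
        have hp : (0:ℝ) < Real.exp 0.062 := Real.exp_pos _
        rw [div_eq_mul_inv, one_mul]
        have h938 : (0.938 : ℝ) ≤ (Real.exp 0.062)⁻¹ := by linarith
        calc Real.exp 0.062 = ((Real.exp 0.062)⁻¹)⁻¹ := by rw [inv_inv]
          _ ≤ (0.938 : ℝ)⁻¹ := by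
              apply inv_anti₀ (by norm_num) h938
      nlinarith [Real.exp_pos (1:ℝ), Real.exp_pos (0.062:ℝ)]
    have e1 : 3.3957 * Real.tanh 0.531 / Real.cosh (2 * 0.531) =
        6.7914 * (y ^ 2 * (y ^ 2 - 1)) / ((y ^ 2 + 1) * (y ^ 4 + 1)) := by
      rw [Real.tanh_eq_sinh_div_cosh, Real.sinh_eq, Real.cosh_eq, Real.cosh_eq, Real.exp_neg,
        Real.exp_neg, hx]
      rw [← hydef]
      have h1 : (0:ℝ) < y + y⁻¹ := by positivity
      have h2 : (0:ℝ) < y ^ 2 + (y ^ 2)⁻¹ := by positivity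
      field_simp
      ring
    rw [e1, gt_iff_lt, lt_div_iff₀ (by positivity)]
    nlinarith [mul_pos (sub_pos.mpr hlow) (sub_pos.mpr hhigh), sq_nonneg (y ^ 2 - 2.892), hy]
end

section
/- Let r₀ > 0 and d > 0 be real numbers, and let θ, ζ be real numbers. Then there exists a real number r such that cosh(ζ)·cosh(r₀)·cosh(r) − cos(θ)·sinh(r₀)·sinh(r) ≤ cosh(d) if and only if sinh²(ζ)·cosh²(r₀) + sin²(θ)·sinh²(r₀) ≤ sinh²(d). -/
open Real

lemma stmt_5_aux (A B C : ℝ) (hA0 : 0 < A) (hAB : B ^ 2 < A ^ 2) (hC0 : 0 < C) :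
    (∃ r : ℝ, A * Real.cosh r - B * Real.sinh r ≤ C) ↔ A ^ 2 - B ^ 2 ≤ C ^ 2 := by
  constructor
  · rintro ⟨r, hr⟩
    have hcsr : |Real.sinh r| < Real.cosh r := by
      rw [Real.abs_sinh, ← Real.cosh_abs]
      exact Real.sinh_lt_cosh _
    have hB : B * Real.sinh r ≤ |B| * |Real.sinh r| := by
      calc B * Real.sinh r ≤ |B * Real.sinh r| := le_abs_self _
        _ = |B| * |Real.sinh r| := abs_mul _ _
    have hBA : |B| < A := by
      nlinarith [abs_nonneg B, sq_abs B]
    have hv0 : 0 < A * Real.cosh r - B * Real.sinh r := by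
      nlinarith [abs_nonneg (Real.sinh r), Real.cosh_pos r]
    have hv2 : A ^ 2 - B ^ 2 ≤ (A * Real.cosh r - B * Real.sinh r) ^ 2 := by
      nlinarith [sq_nonneg (A * Real.sinh r - B * Real.cosh r), Real.cosh_sq r]
    nlinarith
  · intro h
    have hpos : 0 < A ^ 2 - B ^ 2 := by linarith
    set s := Real.sqrt (A ^ 2 - B ^ 2) with hs
    have hs0 : 0 < s := Real.sqrt_pos.mpr hpos
    have hs2 : s ^ 2 = A ^ 2 - B ^ 2 := Real.sq_sqrt hpos.le
    refine ⟨Real.arsinh (B / s), ?_⟩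
    rw [Real.sinh_arsinh, Real.cosh_arsinh]
    have h1 : 1 + (B / s) ^ 2 = (A / s) ^ 2 := by
      field_simp
      nlinarith
    rw [h1, Real.sqrt_sq (by positivity)]
    have hval : A * (A / s) - B * (B / s) = s := by
      field_simp
      nlinarith
    rw [hval]
    have : s ^ 2 ≤ C ^ 2 := by linarith
    nlinarith

/-- For `r₀ > 0`, `d > 0` and real `θ, ζ`: there exists `r` with
`cosh ζ · cosh r₀ · cosh r − cos θ · sinh r₀ · sinh r ≤ cosh d` if and only if
`sinh² ζ · cosh² r₀ + sin² θ · sinh² r₀ ≤ sinh² d`. -/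
theorem stmt_5 (r₀ d θ ζ : ℝ) (hr₀ : 0 < r₀) (hd : 0 < d) :
    (∃ r : ℝ, Real.cosh ζ * Real.cosh r₀ * Real.cosh r -
        Real.cos θ * Real.sinh r₀ * Real.sinh r ≤ Real.cosh d) ↔
      Real.sinh ζ ^ 2 * Real.cosh r₀ ^ 2 + Real.sin θ ^ 2 * Real.sinh r₀ ^ 2 ≤
        Real.sinh d ^ 2 := by
  have hsr : 0 < Real.sinh r₀ := Real.sinh_pos_iff.mpr hr₀
  have hc1 : 1 ≤ Real.cosh ζ := Real.one_le_cosh ζ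
  have hcr : Real.sinh r₀ < Real.cosh r₀ := Real.sinh_lt_cosh r₀
  have hAB : (Real.cos θ * Real.sinh r₀) ^ 2 < (Real.cosh ζ * Real.cosh r₀) ^ 2 := by
    have e1 : Real.cos θ ^ 2 * Real.sinh r₀ ^ 2 ≤ Real.sinh r₀ ^ 2 := by
      nlinarith [Real.cos_sq_le_one θ, sq_nonneg (Real.sinh r₀)]
    have e2 : Real.sinh r₀ ^ 2 < Real.cosh r₀ ^ 2 := by nlinarith
    have e3 : Real.cosh r₀ ^ 2 ≤ Real.cosh ζ ^ 2 * Real.cosh r₀ ^ 2 := by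
      have hcz : 1 ≤ Real.cosh ζ ^ 2 := by nlinarith
      nlinarith [sq_nonneg (Real.cosh r₀)]
    calc (Real.cos θ * Real.sinh r₀) ^ 2 = Real.cos θ ^ 2 * Real.sinh r₀ ^ 2 := by ring
      _ < Real.cosh ζ ^ 2 * Real.cosh r₀ ^ 2 := by linarith
      _ = (Real.cosh ζ * Real.cosh r₀) ^ 2 := by ring
  have hA0 : 0 < Real.cosh ζ * Real.cosh r₀ := by positivity
  rw [stmt_5_aux _ _ _ hA0 hAB (Real.cosh_pos d)]
  have h1 := Real.cosh_sq ζ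
  have h2 := Real.cosh_sq r₀
  have h3 := Real.sin_sq_add_cos_sq θ
  have h4 := Real.cosh_sq d
  constructor <;> intro h <;> nlinarith
end

section
/- Let R > 0 and let S = (1/(2√2)) / arsinh(1/(2√2)). For all real ζ, θ: if S²·ζ²·cosh²(2R) + θ²·sinh²(2R) ≤ sinh²(R), then sinh²(ζ)·cosh²(2R) + sin²(θ)·sinh²(2R) ≤ sinh²(R). -/
open Real

lemma convexOn_sinh_Ici : ConvexOn ℝ (Set.Ici (0:ℝ)) Real.sinh := by
  apply convexOn_of_deriv2_nonneg' (convex_Ici 0)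
    Real.differentiable_sinh.differentiableOn
  · simp only [Real.deriv_sinh]
    exact Real.differentiable_cosh.differentiableOn
  · intro x hx
    simp only [Function.iterate_succ, Function.iterate_zero, Function.comp_apply, id,
      Real.deriv_sinh, Real.deriv_cosh]
    exact Real.sinh_nonneg_iff.2 hx

lemma sinh_le_chord {a x : ℝ} (ha : 0 < a) (hx0 : 0 ≤ x) (hxa : x ≤ a) :
    Real.sinh x ≤ (Real.sinh a / a) * x := by
  have h := convexOn_sinh_Ici.2 (Set.self_mem_Ici) (Set.mem_Ici.2 ha.le)
    (show (0:ℝ) ≤ 1 - x/a by rw [sub_nonneg]; exact div_le_one_of_le₀ hxa ha.le)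
    (show (0:ℝ) ≤ x/a by positivity) (by ring)
  simp only [smul_eq_mul, mul_zero, Real.sinh_zero, zero_add, mul_zero] at h
  rw [div_mul_cancel₀ _ ha.ne'] at h
  calc Real.sinh x ≤ x/a * Real.sinh a := h
    _ = (Real.sinh a / a) * x := by ring

/-- Ellipse containment: with `S = (1/(2√2)) / arsinh (1/(2√2))` and `R > 0`, if
`S² ζ² cosh²(2R) + θ² sinh²(2R) ≤ sinh² R` then
`sinh² ζ · cosh²(2R) + sin² θ · sinh²(2R) ≤ sinh² R`. -/
theorem stmt_6 (R S : ℝ) (hR : 0 < R)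
    (hS : S = (1 / (2 * Real.sqrt 2)) / Real.arsinh (1 / (2 * Real.sqrt 2))) :
    ∀ ζ θ : ℝ,
      S ^ 2 * ζ ^ 2 * Real.cosh (2 * R) ^ 2 + θ ^ 2 * Real.sinh (2 * R) ^ 2 ≤
        Real.sinh R ^ 2 →
      Real.sinh ζ ^ 2 * Real.cosh (2 * R) ^ 2 + Real.sin θ ^ 2 * Real.sinh (2 * R) ^ 2 ≤
        Real.sinh R ^ 2 := by
  intro ζ θ h
  set c : ℝ := 1 / (2 * Real.sqrt 2) with hc_def
  set a : ℝ := Real.arsinh c with ha_def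
  have hsqrt2 : Real.sqrt 2 ^ 2 = 2 := Real.sq_sqrt (by norm_num)
  have hc : (0:ℝ) < c := by positivity
  have hc2 : c ^ 2 = 1 / 8 := by
    rw [hc_def]; rw [div_pow, mul_pow, hsqrt2]; norm_num
  have ha : 0 < a := Real.arsinh_pos_iff.2 hc
  have hsa : Real.sinh a = c := Real.sinh_arsinh c
  have hScA : S * a = c := by rw [hS]; field_simp
  have hSpos : 0 < S := by rw [hS]; positivity
  have hcoshpos : (0:ℝ) < Real.cosh (2 * R) := Real.cosh_pos (2 * R)
  -- sinh R ^ 2 * 8 ≤ cosh(2R)^2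
  have hkey : Real.sinh R ^ 2 * 8 ≤ Real.cosh (2 * R) ^ 2 := by
    nlinarith [Real.cosh_two_mul R, Real.cosh_sq_sub_sinh_sq R,
      sq_nonneg (2 * Real.sinh R ^ 2 - 1), Real.cosh_pos R]
  -- from hypothesis: S^2 ζ^2 ≤ c^2
  have h1 : S ^ 2 * ζ ^ 2 ≤ c ^ 2 := by
    have h0 : S ^ 2 * ζ ^ 2 * Real.cosh (2 * R) ^ 2 ≤ Real.sinh R ^ 2 := by
      nlinarith [mul_nonneg (sq_nonneg θ) (sq_nonneg (Real.sinh (2 * R)))]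
    rw [hc2]
    have h5 : S ^ 2 * ζ ^ 2 * Real.cosh (2 * R) ^ 2 ≤ 1 / 8 * Real.cosh (2 * R) ^ 2 := by
      linarith
    exact le_of_mul_le_mul_right h5 (by positivity)
  have hza : |ζ| ≤ a := by
    have h2 : ζ ^ 2 ≤ a ^ 2 := by
      have : S ^ 2 * ζ ^ 2 ≤ S ^ 2 * a ^ 2 := by
        rw [← hScA] at h1; calc S ^ 2 * ζ ^ 2 ≤ (S * a) ^ 2 := h1
          _ = S ^ 2 * a ^ 2 := by ring
      exact le_of_mul_le_mul_left this (by positivity)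
    rw [← Real.sqrt_sq_eq_abs, ← Real.sqrt_sq ha.le]
    exact Real.sqrt_le_sqrt h2
  have hchord := sinh_le_chord ha (abs_nonneg ζ) hza
  rw [hsa] at hchord
  have hsq : Real.sinh ζ ^ 2 = Real.sinh |ζ| ^ 2 := by
    rcases abs_cases ζ with ⟨h', _⟩ | ⟨h', _⟩ <;> rw [h'] <;> simp [Real.sinh_neg]
  have hsinh : Real.sinh ζ ^ 2 ≤ S ^ 2 * ζ ^ 2 := by
    rw [hsq]
    have h3 : Real.sinh |ζ| ≤ S * |ζ| := by
      rw [hS]; calc Real.sinh |ζ| ≤ c / a * |ζ| := hchord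
        _ = c / a * |ζ| := rfl
    have h4 : 0 ≤ Real.sinh |ζ| := Real.sinh_nonneg_iff.2 (abs_nonneg ζ)
    calc Real.sinh |ζ| ^ 2 ≤ (S * |ζ|) ^ 2 := by nlinarith
      _ = S ^ 2 * ζ ^ 2 := by rw [mul_pow, sq_abs]
  calc Real.sinh ζ ^ 2 * Real.cosh (2 * R) ^ 2 + Real.sin θ ^ 2 * Real.sinh (2 * R) ^ 2
      ≤ S ^ 2 * ζ ^ 2 * Real.cosh (2 * R) ^ 2 + θ ^ 2 * Real.sinh (2 * R) ^ 2 :=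
        add_le_add (mul_le_mul_of_nonneg_right hsinh (sq_nonneg _))
          (mul_le_mul_of_nonneg_right Real.sin_sq_le_sq (sq_nonneg _))
    _ ≤ Real.sinh R ^ 2 := h
end

section
/- Let R > 0 and m > 0 be real numbers, and set a = −tanh(R)·(2cosh²(R) + 1)/cosh²(R), b = (1/m²)·tanh(R)/(2cosh²(R)), and c = (1/m⁴)·(tanh(R) + tanh³(R))/16. Then for every real x, a·x² + b·x + c ≥ 0 if and only if x₁ ≤ x ≤ x₂, where x₁ = −(1/(4m²))·(2cosh²(R) − 1)/(2cosh²(R) + 1) and x₂ = 1/(4m²). -/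
open Real

/-!
With `t = tanh R`, `C = cosh² R` and `u = 1/m²`, the identity `t² C = C - 1` makes
`x₁, x₂` the two roots of the quadratic, so `a x² + b x + c = a (x - x₁)(x - x₂)`.
Since `a < 0` and `x₁ ≤ x₂`, this is nonnegative exactly between the roots.
-/

lemma mul_sub_mul_sub_nonneg_iff_of_neg {R : Type*} [Ring R] [LinearOrder R]
    [IsStrictOrderedRing R] {a r s : R} (x : R) (ha : a < 0) (hrs : r ≤ s) :
    0 ≤ a * ((x - r) * (x - s)) ↔ r ≤ x ∧ x ≤ s := by
  rw [← sub_mul_sub_nonpos_iff x hrs, ← neg_mul_neg, mul_nonneg_iff_of_pos_left (neg_pos.2 ha),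
    neg_nonneg]

lemma boundary_quadratic_eq_mul_roots {t C u : ℝ} (hC : C ≠ 0) (hC' : 2 * C + 1 ≠ 0)
    (htC : t ^ 2 * C = C - 1) (x : ℝ) :
    -(t * (2 * C + 1) / C) * x ^ 2 + u * (t / (2 * C)) * x + u ^ 2 * ((t + t ^ 3) / 16) =
      -(t * (2 * C + 1) / C) *
        ((x - -(u / 4) * ((2 * C - 1) / (2 * C + 1))) * (x - u / 4)) := by
  field_simp
  linear_combination 32 * t * u ^ 2 * htC

lemma tanh_sq_mul_cosh_sq (R : ℝ) : tanh R ^ 2 * cosh R ^ 2 = cosh R ^ 2 - 1 := by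
  rw [tanh_eq_sinh_div_cosh, div_pow, div_mul_cancel₀ _ (pow_ne_zero 2 (cosh_pos R).ne'), sinh_sq]

theorem stmt_9_general (R m a b c x₁ x₂ : ℝ) (hR : 0 < R)
    (ha : a = -(Real.tanh R * (2 * Real.cosh R ^ 2 + 1) / Real.cosh R ^ 2))
    (hb : b = (1 / m ^ 2) * (Real.tanh R / (2 * Real.cosh R ^ 2)))
    (hc : c = (1 / m ^ 4) * ((Real.tanh R + Real.tanh R ^ 3) / 16))
    (hx₁ : x₁ = -(1 / (4 * m ^ 2)) *
      ((2 * Real.cosh R ^ 2 - 1) / (2 * Real.cosh R ^ 2 + 1)))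
    (hx₂ : x₂ = 1 / (4 * m ^ 2)) :
    ∀ x : ℝ, 0 ≤ a * x ^ 2 + b * x + c ↔ (x₁ ≤ x ∧ x ≤ x₂) := by
  intro x
  have hcosh : 1 ≤ cosh R ^ 2 := one_le_pow₀ (one_le_cosh R)
  have htanh : 0 < tanh R := by
    rw [tanh_eq_sinh_div_cosh]
    exact div_pos (sinh_pos_iff.2 hR) (cosh_pos R)
  have ha_neg : a < 0 := by rw [ha, neg_lt_zero]; positivity
  have hroots : x₁ ≤ x₂ := by
    have : 0 ≤ (2 * cosh R ^ 2 - 1) / (2 * cosh R ^ 2 + 1) := div_nonneg (by linarith) (by linarith)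
    rw [hx₁, hx₂, neg_mul]
    exact (neg_nonpos.2 (by positivity)).trans (by positivity)
  have hfactor : a * x ^ 2 + b * x + c = a * ((x - x₁) * (x - x₂)) := by
    rw [ha, hb, hc, hx₁, hx₂, show (1 : ℝ) / m ^ 4 = (1 / m ^ 2) ^ 2 by ring,
      show (1 : ℝ) / (4 * m ^ 2) = 1 / m ^ 2 / 4 by ring]
    exact boundary_quadratic_eq_mul_roots (by positivity) (by positivity) (tanh_sq_mul_cosh_sq R) x
  rw [hfactor, mul_sub_mul_sub_nonneg_iff_of_neg x ha_neg hroots]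

/-- With `a, b, c` as in the boundary-term formula, the quadratic
`a x² + b x + c` is nonnegative exactly for `x₁ ≤ x ≤ x₂`, where
`x₁ = -(1/(4m²)) (2 cosh² R - 1)/(2 cosh² R + 1)` and `x₂ = 1/(4m²)`. -/
theorem stmt_9 (R m a b c x₁ x₂ : ℝ) (hR : 0 < R) (hm : 0 < m)
    (ha : a = -(Real.tanh R * (2 * Real.cosh R ^ 2 + 1) / Real.cosh R ^ 2))
    (hb : b = (1 / m ^ 2) * (Real.tanh R / (2 * Real.cosh R ^ 2)))
    (hc : c = (1 / m ^ 4) * ((Real.tanh R + Real.tanh R ^ 3) / 16))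
    (hx₁ : x₁ = -(1 / (4 * m ^ 2)) *
      ((2 * Real.cosh R ^ 2 - 1) / (2 * Real.cosh R ^ 2 + 1)))
    (hx₂ : x₂ = 1 / (4 * m ^ 2)) :
    ∀ x : ℝ, 0 ≤ a * x ^ 2 + b * x + c ↔ (x₁ ≤ x ∧ x ≤ x₂) :=
  stmt_9_general R m a b c x₁ x₂ hR ha hb hc hx₁ hx₂
end

section
/- Let F(w) = −(1 + 4w + 6w² + w⁴)/((w + 1)·(1 + w²)²). Then (2π)²/(3.3957·(1 − 0.4862)) · exp(∫_{0.4862}^{1} (−F(w)) dw) ≤ (7.515)². -/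
open Real intervalIntegral

/-! An antiderivative of `-F` is `log (w + 1) - 2 / (1 + w²)`, so the exponential factor equals
`2 / (1 + z₁) · exp t` with `t = 2 / (1 + z₁²) - 1 ≈ 0.6176`. A seventh-order Taylor bound for
`exp t` and `π < 3.141593` then bound the threshold by `56.4697 < 7.515²`. -/

lemma hasDerivAt_log_add_one_sub_two_div_one_add_sq {w : ℝ} (hw : w + 1 ≠ 0) :
    HasDerivAt (fun w => log (w + 1) - 2 / (1 + w ^ 2))
      ((1 + 4 * w + 6 * w ^ 2 + w ^ 4) / ((w + 1) * (1 + w ^ 2) ^ 2)) w := by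
  have hq : 1 + w ^ 2 ≠ 0 := by positivity
  have hlog := ((hasDerivAt_id' w).add_const 1).log hw
  have hfrac := (hasDerivAt_const w (2 : ℝ)).div ((hasDerivAt_pow 2 w).const_add 1) hq
  refine (hlog.sub hfrac).congr_deriv ?_
  field_simp
  ring

lemma integral_eq_log_add_two_div_one_add_sq {a b : ℝ} (h : (-1 : ℝ) ∉ Set.uIcc a b) :
    ∫ w in a..b, (1 + 4 * w + 6 * w ^ 2 + w ^ 4) / ((w + 1) * (1 + w ^ 2) ^ 2) =
      log (b + 1) - log (a + 1) + (2 / (1 + a ^ 2) - 2 / (1 + b ^ 2)) := by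
  have hne : ∀ w ∈ Set.uIcc a b, w + 1 ≠ 0 := fun w hw hw0 =>
    h (by rwa [show w = -1 by linarith] at hw)
  have hcont : ContinuousOn
      (fun w : ℝ => (1 + 4 * w + 6 * w ^ 2 + w ^ 4) / ((w + 1) * (1 + w ^ 2) ^ 2))
      (Set.uIcc a b) :=
    ContinuousOn.div (by fun_prop) (by fun_prop) fun w hw => mul_ne_zero (hne w hw) (by positivity)
  rw [integral_eq_sub_of_hasDerivAt
    (fun w hw => hasDerivAt_log_add_one_sub_two_div_one_add_sq (hne w hw)) hcont.intervalIntegrable]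
  ring

lemma exp_two_div_one_add_sq_sub_one_le : exp (2 / (1 + 0.4862 ^ 2) - 1) ≤ 1.85449461 := by
  set t : ℝ := 2 / (1 + 0.4862 ^ 2) - 1 with ht
  calc exp t ≤ ∑ m ∈ Finset.range 7, t ^ m / m.factorial + t ^ 7 * (7 + 1) / (Nat.factorial 7 * 7) :=
        exp_bound' (by norm_num [ht]) (by norm_num [ht]) (by norm_num)
    _ ≤ 1.85449461 := by
        simp only [Finset.sum_range_succ, Finset.sum_range_zero]
        norm_num [ht, Nat.factorial]

/-- With `F w = −(1 + 4w + 6w² + w⁴)/((w + 1)(1 + w²)²)`, the threshold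
`(2π)²/(3.3957 (1 − 0.4862)) · exp (∫_{0.4862}^{1} (−F w) dw)` is at most `7.515²`. -/
theorem stmt_18 (F : ℝ → ℝ)
    (hF : ∀ w, F w = -(1 + 4 * w + 6 * w ^ 2 + w ^ 4) / ((w + 1) * (1 + w ^ 2) ^ 2)) :
    (2 * Real.pi) ^ 2 / (3.3957 * (1 - 0.4862)) *
      Real.exp (∫ w in (0.4862 : ℝ)..1, -F w) ≤ 7.515 ^ 2 := by
  have hnegF : (fun w => -F w) =
      fun w => (1 + 4 * w + 6 * w ^ 2 + w ^ 4) / ((w + 1) * (1 + w ^ 2) ^ 2) :=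
    funext fun w => by rw [hF, neg_div, neg_neg]
  rw [hnegF, integral_eq_log_add_two_div_one_add_sq (by norm_num [Set.uIcc_of_le]), exp_add,
    exp_sub, exp_log (by norm_num), exp_log (by norm_num)]
  calc (2 * π) ^ 2 / (3.3957 * (1 - 0.4862)) * ((1 + 1) / (0.4862 + 1) *
        exp (2 / (1 + 0.4862 ^ 2) - 2 / (1 + 1 ^ 2)))
      = (2 * π) ^ 2 * exp (2 / (1 + 0.4862 ^ 2) - 1) * (2 / (1.4862 * (3.3957 * 0.5138))) := by
        norm_num
        ring
    _ ≤ (2 * 3.141593) ^ 2 * 1.85449461 * (2 / (1.4862 * (3.3957 * 0.5138))) := by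
        gcongr
        · exact pi_lt_d6.le
        · exact exp_two_div_one_add_sq_sub_one_le
    _ ≤ 7.515 ^ 2 := by norm_num
end
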